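/- arXiv:1707.07786 — 2 statements merged into one kernel-verified Lean document; each statement's English description precedes it below -/
import Mathlib

section
/- Let (G,X) be a G-system, x ∈ X, and F = (F_n)_{n∈D} a Følner net in G. Suppose C_F(x) is S-generic (there exists z ∈ C_F(x) with C_F(z) = C_F(x)) and C_F(x) is not a minimal subset of (G,X). Let S_x = {y ∈ C_F(x) : C_F(y) = C_F(x)}. Then for every y ∈ S_x and every minimal subset Δ ⊆ C_F(x), there exists z ∈ Δ such that the pair {y,z} is Li–Yorke chaotic for (G,X) and there exist sequences (t_n) and (s_n) in G with lim_n d(s_n y, z) = 0 and liminf_n d(t_n y, z) ≥ (1/2)·diam(C_F(x)), where diam denotes the diameter. Moreover, if G is commutative, then S_x is dense in C_F(x). -/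
open Filter Metric Set

section Defs

variable {G : Type*} [Group G] [DecidableEq G]
variable {D : Type*} [Preorder D]

/-- `F` is a (left) Følner net in `G`. -/
def IsFolnerNet (F : D → Finset G) : Prop :=
  (∀ n, (F n).Nonempty) ∧
    ∀ g : G,
      Tendsto (fun n : D =>
          ((symmDiff ((F n).image fun h => g * h) (F n)).card : ℝ) / (F n).card)
        atTop (nhds 0)

/-- Upper density of `A ⊆ G` relative to the net `F`. -/
noncomputable def upperDensity (F : D → Finset G) (A : Set G) : ℝ :=
  sSup {α : ℝ | ∀ m : D, ∃ n : D, m ≤ n ∧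
    α ≤ (((F n : Set G) ∩ A).ncard : ℝ) / (F n).card}

variable {X : Type*} [MetricSpace X] [MulAction G X]

/-- The minimal `F`-center of attraction of `x`. -/
def minCenter (F : D → Finset G) (x : X) : Set X :=
  {y : X | ∀ U : Set X, IsOpen U → y ∈ U → 0 < upperDensity F {g : G | g • x ∈ U}}

end Defs

/-- `Λ` is a minimal subset of the `G`-system: nonempty, closed, `G`-invariant, and containing
no nonempty proper closed `G`-invariant subset. -/
def IsMinimalSubset (G : Type*) [Group G] {X : Type*} [MetricSpace X] [MulAction G X]
    (Λ : Set X) : Prop :=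
  Λ.Nonempty ∧ IsClosed Λ ∧ (∀ g : G, ∀ z ∈ Λ, g • z ∈ Λ) ∧
    ∀ Λ' ⊆ Λ, Λ'.Nonempty → IsClosed Λ' → (∀ g : G, ∀ z ∈ Λ', g • z ∈ Λ') → Λ' = Λ

/-- The pair `{x, y}` is proximal. -/
def IsProximalPair (G : Type*) [Group G] {X : Type*} [MetricSpace X] [MulAction G X]
    (x y : X) : Prop :=
  ∃ t : ℕ → G, Tendsto (fun n => dist ((t n) • x) ((t n) • y)) atTop (nhds 0)

/-- The pair `{x, y}` is asymptotic. -/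
def IsAsymptoticPair (G : Type*) [Group G] {X : Type*} [MetricSpace X] [MulAction G X]
    (x y : X) : Prop :=
  ∀ ε : ℝ, 0 < ε → ∃ F : Finset G, ∀ g : G, g ∉ F → dist (g • x) (g • y) < ε

/-!
Positive upper density along a Følner net in an infinite group forces infinitely many return
times, since the Følner sets grow without bound. For `y ∈ S_x`, an idempotent `u` of the Ellis
enveloping semigroup with `u y ∈ Δ` satisfies `u (u y) = u y`, so `z = u y ∈ Δ` is proximal to
`y`. As `C_F(x)` is not minimal it has a point outside the closed invariant set `Δ`, which the
orbit of `y` approaches infinitely often while the orbit of `z` stays in `Δ`: the pair is not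
asymptotic. The sequences `s` and `t` approach `z` and a point of `C_F(x)` farthest from `z`,
both in the orbit closure of `y`. For commutative `G`, `C_F(g • y) = g • C_F(y)`, so the orbit of
a point of `S_x` stays in `S_x`, and its closure contains `C_F(x)`.
-/

open scoped Pointwise symmDiff

theorem ncard_inter_div_card_le_one {α : Type*} (s : Finset α) (A : Set α) :
    (((s : Set α) ∩ A).ncard : ℝ) / s.card ≤ 1 :=
  div_le_one_of_le₀ (by
    have := Set.ncard_le_ncard (inter_subset_left (t := A)) s.finite_toSet
    rw [Set.ncard_coe_finset] at this
    exact_mod_cast this) (Nat.cast_nonneg _)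

section UpperDensity

variable {G : Type*} {D : Type*} [Preorder D] [Nonempty D] {F : D → Finset G} {A : Set G}

theorem upperDensity_pos_iff : 0 < upperDensity F A ↔
    ∃ α > 0, ∀ m, ∃ n, m ≤ n ∧ α ≤ (((F n : Set G) ∩ A).ncard : ℝ) / (F n).card := by
  constructor
  · intro h
    by_contra! hα
    refine h.not_ge (Real.sSup_nonpos fun α hmem => ?_)
    by_contra! hpos
    obtain ⟨m, hm⟩ := hα α hpos
    obtain ⟨n, hmn, hn⟩ := hmem m
    exact (hm n hmn).not_ge hn
  · rintro ⟨α, hα, hmem⟩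
    refine hα.trans_le (le_csSup ⟨1, fun β hβ => ?_⟩ hmem)
    obtain ⟨n, -, hn⟩ := hβ (Classical.arbitrary D)
    exact hn.trans (ncard_inter_div_card_le_one _ _)

theorem nonempty_of_upperDensity_pos (h : 0 < upperDensity F A) : A.Nonempty := by
  obtain ⟨α, hα, hmem⟩ := upperDensity_pos_iff.1 h
  obtain ⟨n, -, hn⟩ := hmem (Classical.arbitrary D)
  refine (Set.nonempty_of_ncard_ne_zero (s := (F n : Set G) ∩ A) fun h0 => ?_).mono
    inter_subset_right
  rw [h0, Nat.cast_zero, zero_div] at hn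
  exact hα.not_ge hn

end UpperDensity

section Folner

variable {G : Type*} [Group G] [DecidableEq G] {D : Type*} [Preorder D] {F : D → Finset G}
  {A : Set G}

theorem card_le_card_symmDiff_image_mul {s : Finset G} {k : G} (hk : k ∉ s * s⁻¹) :
    s.card ≤ (symmDiff (s.image (k * ·)) s).card := by
  refine Finset.card_le_card fun a ha => Finset.mem_symmDiff.2 (Or.inr ⟨ha, fun hka => hk ?_⟩)
  obtain ⟨b, hb, rfl⟩ := Finset.mem_image.1 hka
  simpa using Finset.mul_mem_mul ha (Finset.inv_mem_inv hb)

/-- If `|F n| < N` then `F n * (F n)⁻¹` misses some `k` of a fixed `N²`-element set, and then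
`k • F n` is disjoint from `F n`, against the Følner condition. -/
theorem IsFolnerNet.eventually_le_card [Infinite G] (hF : IsFolnerNet F) (N : ℕ) :
    ∀ᶠ n in atTop, N ≤ (F n).card := by
  obtain ⟨K, hK⟩ := Infinite.exists_subset_card_eq G (N * N)
  have hsmall : ∀ᶠ n in atTop, ∀ k ∈ K,
      ((symmDiff ((F n).image (k * ·)) (F n)).card : ℝ) / (F n).card < 1 :=
    (eventually_all_finset K).2 fun k _ => (hF.2 k).eventually_lt_const one_pos
  filter_upwards [hsmall] with n hn
  by_contra! hlt
  have hcard : (F n * (F n)⁻¹).card < K.card :=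
    calc (F n * (F n)⁻¹).card ≤ (F n).card * (F n).card := by
          simpa using Finset.card_mul_le (s := F n) (t := (F n)⁻¹)
      _ < N * N := Nat.mul_self_lt_mul_self hlt
      _ = K.card := hK.symm
  obtain ⟨k, hkK, hk⟩ := Finset.exists_mem_notMem_of_card_lt_card hcard
  have hpos : (0 : ℝ) < (F n).card := by exact_mod_cast (hF.1 n).card_pos
  refine (div_lt_one hpos).1 (hn k hkK) |>.not_ge ?_
  exact_mod_cast card_le_card_symmDiff_image_mul hk

theorem ncard_inter_le_ncard_inter_smul_add (s : Finset G) (A : Set G) (g : G) :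
    ((s : Set G) ∩ A).ncard ≤
      ((s : Set G) ∩ g • A).ncard + (symmDiff (s.image (g * ·)) s).card := by
  have hsub : g • ((s : Set G) ∩ A) ⊆
      ((s : Set G) ∩ g • A) ∪ (symmDiff (s.image (g * ·)) s : Finset G) := by
    rintro _ ⟨h, ⟨hs, hA⟩, rfl⟩
    by_cases hgh : g * h ∈ s
    · exact Or.inl ⟨hgh, h, hA, rfl⟩
    · exact Or.inr (Finset.mem_symmDiff.2 (Or.inl ⟨Finset.mem_image_of_mem _ hs, hgh⟩))
  calc ((s : Set G) ∩ A).ncard = (g • ((s : Set G) ∩ A)).ncard := (Set.ncard_smul_set g _).symm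
    _ ≤ (((s : Set G) ∩ g • A) ∪ (symmDiff (s.image (g * ·)) s : Finset G)).ncard :=
      Set.ncard_le_ncard hsub ((s.finite_toSet.inter_of_left _).union (Finset.finite_toSet _))
    _ ≤ _ := (Set.ncard_union_le _ _).trans_eq (by rw [Set.ncard_coe_finset])

variable [IsDirected D (· ≤ ·)] [Nonempty D]

theorem infinite_of_upperDensity_pos [Infinite G] (hF : IsFolnerNet F)
    (h : 0 < upperDensity F A) : A.Infinite := by
  intro hA
  obtain ⟨α, hα, hmem⟩ := upperDensity_pos_iff.1 h
  obtain ⟨n, hn, hcard⟩ := ((frequently_atTop.2 hmem).and_eventually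
    (hF.eventually_le_card (⌈A.ncard / α⌉₊ + 1))).exists
  have hlarge : (A.ncard : ℝ) / α < (F n).card :=
    (Nat.le_ceil _).trans_lt (by exact_mod_cast hcard)
  have hpos : (0 : ℝ) < (F n).card := (div_nonneg (Nat.cast_nonneg _) hα.le).trans_lt hlarge
  have hsmall : (((F n : Set G) ∩ A).ncard : ℝ) ≤ A.ncard := by
    exact_mod_cast Set.ncard_le_ncard inter_subset_right hA
  rw [le_div_iff₀ hpos] at hn
  rw [div_lt_iff₀ hα] at hlarge
  linarith

theorem upperDensity_smul_pos (hF : IsFolnerNet F) (g : G) (h : 0 < upperDensity F A) :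
    0 < upperDensity F (g • A) := by
  obtain ⟨α, hα, hmem⟩ := upperDensity_pos_iff.1 h
  refine upperDensity_pos_iff.2 ⟨α / 2, half_pos hα, frequently_atTop.1 ?_⟩
  refine ((frequently_atTop.2 hmem).and_eventually
    ((hF.2 g).eventually_lt_const (half_pos hα))).mono fun n ⟨hn, herr⟩ => ?_
  have htrans : (((F n : Set G) ∩ A).ncard : ℝ) / (F n).card ≤
      (((F n : Set G) ∩ g • A).ncard : ℝ) / (F n).card +
        ((symmDiff ((F n).image (g * ·)) (F n)).card : ℝ) / (F n).card := by
    rw [← add_div]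
    gcongr
    exact_mod_cast ncard_inter_le_ncard_inter_smul_add (F n) A g
  linarith

end Folner

section MinCenter

variable {G : Type*} [Group G] {D : Type*} [Preorder D] {F : D → Finset G}
  {X : Type*} [MetricSpace X] [MulAction G X]

theorem isClosed_minCenter (F : D → Finset G) (x : X) : IsClosed (minCenter F x) := by
  refine isOpen_compl_iff.1 (isOpen_iff_forall_mem_open.2 fun y hy => ?_)
  simp only [mem_compl_iff, minCenter, mem_ofPred_eq, not_forall] at hy
  obtain ⟨U, hU, hyU, hd⟩ := hy
  exact ⟨U, fun p hp hpC => hd (hpC U hU hp), hU, hyU⟩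

theorem minCenter_subset_closure_orbit [Nonempty D] (F : D → Finset G) (y : X) :
    minCenter F y ⊆ closure (MulAction.orbit G y) := fun w hw =>
  mem_closure_iff.2 fun U hU hwU => by
    obtain ⟨g, hg⟩ := nonempty_of_upperDensity_pos (hw U hU hwU)
    exact ⟨g • y, hg, g, rfl⟩

theorem minCenter_smul_of_commute [ContinuousConstSMul G X] {g : G}
    (hg : ∀ h : G, Commute g h) (y : X) : minCenter F (g • y) = g • minCenter F y := by
  have hreturns : ∀ U : Set X, {h : G | h • g • y ∈ U} = {h : G | h • y ∈ g⁻¹ • U} := fun U => by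
    ext h
    simp [Set.mem_smul_set_iff_inv_smul_mem, smul_smul, (hg h).eq]
  ext w
  rw [Set.mem_smul_set_iff_inv_smul_mem]
  constructor
  · intro hw U hU hwU
    have := hw (g • U) (hU.smul g) (Set.mem_smul_set_iff_inv_smul_mem.2 hwU)
    rwa [hreturns, inv_smul_smul] at this
  · intro hw U hU hwU
    rw [hreturns]
    exact hw _ (hU.smul _) (Set.smul_mem_smul_set hwU)

variable [DecidableEq G] [IsDirected D (· ≤ ·)] [Nonempty D] [ContinuousConstSMul G X]

theorem smul_mem_minCenter (hF : IsFolnerNet F) {x w : X} (hw : w ∈ minCenter F x) (g : G) :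
    g • w ∈ minCenter F x := by
  intro U hU hgw
  have hreturns : g • {h : G | h • x ∈ g⁻¹ • U} = {h : G | h • x ∈ U} := by
    ext h
    simp [Set.mem_smul_set_iff_inv_smul_mem, mul_smul]
  rw [← hreturns]
  exact upperDensity_smul_pos hF g
    (hw _ (hU.smul g⁻¹) (Set.mem_smul_set_iff_inv_smul_mem.2 (by rwa [inv_inv])))

theorem smul_set_minCenter (hF : IsFolnerNet F) (g : G) (x : X) :
    g • minCenter F x = minCenter F x :=
  Subset.antisymm (Set.smul_set_subset_iff.2 fun _ hw => smul_mem_minCenter hF hw g)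
    fun _ hw => Set.mem_smul_set_iff_inv_smul_mem.2 (smul_mem_minCenter hF hw g⁻¹)

theorem orbit_subset_setOf_minCenter_eq (hF : IsFolnerNet F) (hcomm : ∀ a b : G, Commute a b)
    {x z : X} (hz : z ∈ minCenter F x) (hzx : minCenter F z = minCenter F x) :
    MulAction.orbit G z ⊆ {y | y ∈ minCenter F x ∧ minCenter F y = minCenter F x} := by
  rintro _ ⟨g, rfl⟩
  refine ⟨smul_mem_minCenter hF hz g, ?_⟩
  rw [minCenter_smul_of_commute (hcomm g), hzx, smul_set_minCenter hF]

end MinCenter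

/-- The Ellis–Numakura lemma for self-maps under composition with the topology of pointwise
convergence; `Function.End X` supplies the composition semigroup. -/
theorem exists_comp_self_eq_of_isCompact {X : Type*} [TopologicalSpace X] [T2Space X]
    {S : Set (X → X)} (hne : S.Nonempty) (hS : IsCompact S)
    (hcomp : ∀ f ∈ S, ∀ g ∈ S, f ∘ g ∈ S) : ∃ u ∈ S, u ∘ u = u := by
  let _ : TopologicalSpace (Function.End X) := Pi.topologicalSpace
  have _ : T2Space (Function.End X) := Pi.t2Space
  exact exists_idempotent_in_compact_subsemigroup (M := Function.End X)
    (fun r => continuous_pi fun x => continuous_apply (r x)) S hne hS hcomp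

section Enveloping

variable (G : Type*) [Group G] (X : Type*) [TopologicalSpace X] [MulAction G X]

def envelopingSemigroup : Set (X → X) :=
  closure (range fun g : G => fun x : X => g • x)

variable {G X}

theorem apply_mem_closure_orbit {f : X → X} (hf : f ∈ envelopingSemigroup G X) (x : X) :
    f x ∈ closure (MulAction.orbit G x) :=
  map_mem_closure (f := fun f : X → X => f x) (continuous_apply x) hf
    (by rintro _ ⟨g, rfl⟩; exact ⟨g, rfl⟩)

theorem comp_mem_envelopingSemigroup [ContinuousConstSMul G X] {f q : X → X}
    (hf : f ∈ envelopingSemigroup G X) (hq : q ∈ envelopingSemigroup G X) :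
    f ∘ q ∈ envelopingSemigroup G X := by
  have hsmul_comp : ∀ g : G, (fun x : X => g • x) ∘ q ∈ envelopingSemigroup G X := fun g =>
    map_mem_closure (f := ((fun x : X => g • x) ∘ ·))
      (continuous_pi fun x => (continuous_const_smul g).comp (continuous_apply x))
      hq (by rintro _ ⟨h, rfl⟩; exact ⟨g * h, funext fun x => mul_smul g h x⟩)
  simpa only [envelopingSemigroup, closure_closure] using
    map_mem_closure (f := (· ∘ q)) (t := envelopingSemigroup G X)
      (continuous_pi fun x => continuous_apply (q x)) hf (by rintro _ ⟨g, rfl⟩; exact hsmul_comp g)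

theorem isCompact_envelopingSemigroup [CompactSpace X] : IsCompact (envelopingSemigroup G X) :=
  isClosed_closure.isCompact

theorem image_apply_envelopingSemigroup [CompactSpace X] [T2Space X] (x : X) :
    (fun f : X → X => f x) '' envelopingSemigroup G X = closure (MulAction.orbit G x) := by
  refine Subset.antisymm (image_subset_iff.2 fun f hf => apply_mem_closure_orbit hf x) ?_
  refine closure_minimal ?_ (isCompact_envelopingSemigroup.image (continuous_apply x)).isClosed
  rintro _ ⟨g, rfl⟩
  exact ⟨fun y => g • y, subset_closure ⟨g, rfl⟩, rfl⟩

end Enveloping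

theorem exists_seq_tendsto_of_mem_closure_range {ι α : Type*} [TopologicalSpace α]
    [FrechetUrysohnSpace α] {f : ι → α} {a : α} (h : a ∈ closure (range f)) :
    ∃ t : ℕ → ι, Tendsto (f ∘ t) atTop (nhds a) := by
  obtain ⟨p, hp, hlim⟩ := mem_closure_iff_seq_limit.1 h
  choose t ht using hp
  exact ⟨t, by simpa only [Function.comp_def, ht] using hlim⟩

section Proximal

variable {G : Type*} [Group G] {X : Type*} [MetricSpace X] [MulAction G X]

theorem isProximalPair_of_apply_eq {f : X → X} (hf : f ∈ envelopingSemigroup G X) {y z : X}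
    (h : f y = f z) : IsProximalPair G y z := by
  obtain ⟨t, ht⟩ := exists_seq_tendsto_of_mem_closure_range <|
    map_mem_closure (f := fun q : X → X => (q y, q z)) (by fun_prop) hf
      (t := range fun g : G => (g • y, g • z)) (by rintro _ ⟨g, rfl⟩; exact ⟨g, rfl⟩)
  refine ⟨t, ?_⟩
  simpa [h, Function.comp_def] using (continuous_dist.tendsto _).comp ht

theorem exists_isProximalPair_of_subset_closure_orbit [CompactSpace X] [ContinuousConstSMul G X]
    {y : X} {Δ : Set X} (hne : Δ.Nonempty) (hcl : IsClosed Δ)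
    (hinv : ∀ g : G, ∀ z ∈ Δ, g • z ∈ Δ) (hΔ : Δ ⊆ closure (MulAction.orbit G y)) :
    ∃ z ∈ Δ, IsProximalPair G y z := by
  set J := envelopingSemigroup G X ∩ (fun f : X → X => f y) ⁻¹' Δ
  have hJne : J.Nonempty := by
    obtain ⟨z, hz⟩ := hne
    obtain ⟨f, hf, rfl⟩ := (image_apply_envelopingSemigroup (G := G) y).symm ▸ hΔ hz
    exact ⟨f, hf, hz⟩
  have hJcomp : ∀ f ∈ J, ∀ q ∈ J, f ∘ q ∈ J := fun f hf q hq =>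
    ⟨comp_mem_envelopingSemigroup hf.1 hq.1,
      closure_minimal (by rintro _ ⟨g, rfl⟩; exact hinv g _ hq.2) hcl
        (apply_mem_closure_orbit hf.1 (q y))⟩
  obtain ⟨u, hu, huu⟩ := exists_comp_self_eq_of_isCompact hJne
    (isCompact_envelopingSemigroup.inter_right (hcl.preimage (continuous_apply y))) hJcomp
  exact ⟨u y, hu.2, isProximalPair_of_apply_eq hu.1 (congrFun huu y).symm⟩

end Proximal

theorem IsCompact.exists_diam_le_two_mul_dist {X : Type*} [MetricSpace X] {s : Set X}
    (hs : IsCompact s) (hne : s.Nonempty) (z : X) : ∃ w ∈ s, diam s ≤ 2 * dist w z := by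
  obtain ⟨w, hw, hmax⟩ := hs.exists_isMaxOn hne
    (by fun_prop : Continuous fun p : X => dist p z).continuousOn
  refine ⟨w, hw, diam_le_of_forall_dist_le (by positivity) fun p hp q hq => ?_⟩
  calc dist p q ≤ dist p z + dist q z := dist_triangle_right p q z
    _ ≤ 2 * dist w z := by linarith [isMaxOn_iff.1 hmax p hp, isMaxOn_iff.1 hmax q hq]

theorem not_isAsymptoticPair_of_infinite_returns {G : Type*} [Group G] {X : Type*}
    [MetricSpace X] [MulAction G X] {y z w : X} {Δ : Set X} (hcl : IsClosed Δ)
    (hinv : ∀ g : G, ∀ z ∈ Δ, g • z ∈ Δ) (hz : z ∈ Δ) (hw : w ∉ Δ)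
    (hret : ∀ U, IsOpen U → w ∈ U → {g : G | g • y ∈ U}.Infinite) :
    ¬ IsAsymptoticPair G y z := by
  intro hasym
  obtain ⟨r, hr, hball⟩ := Metric.isOpen_iff.1 hcl.isOpen_compl w hw
  obtain ⟨F₀, hF₀⟩ := hasym (r / 2) (half_pos hr)
  obtain ⟨g, hgy, hg⟩ :=
    (hret _ isOpen_ball (mem_ball_self (half_pos hr))).exists_notMem_finset F₀
  refine hball (mem_ball.2 ?_) (hinv g z hz)
  calc dist (g • z) w ≤ dist (g • z) (g • y) + dist (g • y) w := dist_triangle _ _ _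
    _ < r / 2 + r / 2 := add_lt_add (by rw [dist_comm]; exact hF₀ g hg) hgy
    _ = r := add_halves r

/-- Theorem 3.5: Li–Yorke chaotic pairs for an S-generic non-minimal center of attraction;
moreover if `G` is commutative the set `S_x` is dense in `C_F(x)`. -/
theorem liYorke_of_Sgeneric_nonminimal
    {G : Type*} [Group G] [Infinite G] [DecidableEq G]
    {D : Type*} [Preorder D] [IsDirected D (· ≤ ·)] [Nonempty D]
    {X : Type*} [MetricSpace X] [CompactSpace X] [MulAction G X]
    (hcont : ∀ g : G, Continuous fun y : X => g • y)
    (Fol : D → Finset G) (hFol : IsFolnerNet Fol) (x : X)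
    (hS : ∃ z ∈ minCenter Fol x, minCenter Fol z = minCenter Fol x)
    (hnotmin : ¬ IsMinimalSubset G (minCenter Fol x)) :
    (∀ y ∈ {y : X | y ∈ minCenter Fol x ∧ minCenter Fol y = minCenter Fol x},
      ∀ Δ : Set X, Δ ⊆ minCenter Fol x → IsMinimalSubset G Δ →
        ∃ z ∈ Δ,
          (IsProximalPair G y z ∧ ¬ IsAsymptoticPair G y z) ∧
          (∃ s : ℕ → G, Tendsto (fun n => dist ((s n) • y) z) atTop (nhds 0)) ∧
          (∃ t : ℕ → G,
            (1 / 2) * Metric.diam (minCenter Fol x) ≤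
              Filter.liminf (fun n => dist ((t n) • y) z) atTop)) ∧
    ((∀ a b : G, a * b = b * a) →
      minCenter Fol x ⊆
        closure {y : X | y ∈ minCenter Fol x ∧ minCenter Fol y = minCenter Fol x}) := by
  have : ContinuousConstSMul G X := ⟨hcont⟩
  refine ⟨?_, fun hcomm => ?_⟩
  · rintro y ⟨hyC, hyc⟩ Δ hΔC hΔ
    have horb : minCenter Fol x ⊆ closure (MulAction.orbit G y) :=
      hyc ▸ minCenter_subset_closure_orbit Fol y
    obtain ⟨z, hzΔ, hprox⟩ := exists_isProximalPair_of_subset_closure_orbit hΔ.1 hΔ.2.1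
      hΔ.2.2.1 (hΔC.trans horb)
    obtain ⟨w, hwC, hwΔ⟩ : ∃ w ∈ minCenter Fol x, w ∉ Δ := by
      by_contra! h
      exact hnotmin (Subset.antisymm hΔC h ▸ hΔ)
    obtain ⟨s, hs⟩ := exists_seq_tendsto_of_mem_closure_range (horb (hΔC hzΔ))
    obtain ⟨w', hw'C, hdiam⟩ :=
      (isClosed_minCenter Fol x).isCompact.exists_diam_le_two_mul_dist ⟨y, hyC⟩ z
    obtain ⟨t, ht⟩ := exists_seq_tendsto_of_mem_closure_range (horb hw'C)
    have hdist : Tendsto (fun n => dist (t n • y) z) atTop (nhds (dist w' z)) :=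
      ht.dist tendsto_const_nhds
    refine ⟨z, hzΔ, ⟨hprox, ?_⟩, ⟨s, tendsto_iff_dist_tendsto_zero.1 hs⟩, t, ?_⟩
    · refine not_isAsymptoticPair_of_infinite_returns hΔ.2.1 hΔ.2.2.1 hzΔ hwΔ fun U hU hwU => ?_
      exact infinite_of_upperDensity_pos hFol ((hyc ▸ hwC : w ∈ minCenter Fol y) U hU hwU)
    · rw [hdist.liminf_eq]
      linarith
  · obtain ⟨z, hzC, hzc⟩ := hS
    calc minCenter Fol x = minCenter Fol z := hzc.symm
      _ ⊆ closure (MulAction.orbit G z) := minCenter_subset_closure_orbit Fol z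
      _ ⊆ _ := closure_mono (orbit_subset_setOf_minCenter_eq hFol hcomm hzC hzc)
end

section
/- Let (G,X) be a G-system, x ∈ X, and F = (F_n)_{n∈D} a Følner net in G. If C_F(x) is S-generic (there exists z ∈ C_F(x) with C_F(z) = C_F(x)) and C_F(x) is not a minimal subset of (G,X), then there exists an F-chaotic pair in C_F(x): there are points y, z ∈ C_F(x) and sequences (l_n), (r_n), (s_n), (t_n) in G such that lim_n d(l_n y, z) = 0, liminf_n d(r_n y, z) > 0, lim_n d(s_n y, s_n z) = 0, and liminf_n d(t_n y, t_n z) > 0. -/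
open Filter Metric Set

set_option linter.unusedSectionVars false

section Aux

variable {G : Type*} [Group G] [DecidableEq G]
variable {D : Type*} [Preorder D] [IsDirected D (· ≤ ·)] [Nonempty D]
variable {Fol : D → Finset G}

lemma exists_pos_of_ud_pos {A : Set G} (h : 0 < upperDensity Fol A) :
    ∃ α > 0, ∀ m : D, ∃ n : D, m ≤ n ∧
      α ≤ (((Fol n : Set G) ∩ A).ncard : ℝ) / (Fol n).card := by
  by_contra hc
  push_neg at hc
  have h0 : (0:ℝ) ∈ {α : ℝ | ∀ m : D, ∃ n : D, m ≤ n ∧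
      α ≤ (((Fol n : Set G) ∩ A).ncard : ℝ) / (Fol n).card} :=
    fun m => ⟨m, le_refl m, by positivity⟩
  have : upperDensity Fol A ≤ 0 := by
    apply csSup_le ⟨0, h0⟩
    intro α hα
    by_contra h'
    push_neg at h'
    obtain ⟨m, hm⟩ := hc α h'
    obtain ⟨n, hn, hn'⟩ := hα m
    exact absurd hn' (not_le.mpr (hm n hn))
  linarith

lemma ratio_le_one (hF : ∀ n, (Fol n).Nonempty) (A : Set G) (n : D) :
    (((Fol n : Set G) ∩ A).ncard : ℝ) / (Fol n).card ≤ 1 := by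
  have hc : (0:ℝ) < (Fol n).card := by
    exact_mod_cast Finset.card_pos.mpr (hF n)
  rw [div_le_one hc]
  have : ((Fol n : Set G) ∩ A).ncard ≤ (Fol n).card := by
    calc ((Fol n : Set G) ∩ A).ncard ≤ (Fol n : Set G).ncard :=
          Set.ncard_le_ncard inter_subset_left (Fol n).finite_toSet
      _ = (Fol n).card := Set.ncard_coe_finset _
  exact_mod_cast this

lemma le_ud_of_mem (hF : ∀ n, (Fol n).Nonempty) {A : Set G} {α : ℝ}
    (hα : ∀ m : D, ∃ n : D, m ≤ n ∧
      α ≤ (((Fol n : Set G) ∩ A).ncard : ℝ) / (Fol n).card) :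
    α ≤ upperDensity Fol A := by
  refine le_csSup ⟨1, fun β hβ => ?_⟩ hα
  obtain ⟨n, _, hn⟩ := hβ (Classical.arbitrary D)
  exact hn.trans (ratio_le_one hF A n)

lemma nonempty_of_ud_pos (hF : ∀ n, (Fol n).Nonempty) {A : Set G}
    (h : 0 < upperDensity Fol A) : A.Nonempty := by
  obtain ⟨α, hα, hP⟩ := exists_pos_of_ud_pos h
  rcases A.eq_empty_or_nonempty with rfl | hA
  · obtain ⟨n, _, hn⟩ := hP (Classical.arbitrary D)
    simp at hn
    linarith
  · exact hA

lemma ud_smul_pos (hFol : IsFolnerNet Fol) (g : G) {A : Set G}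
    (h : 0 < upperDensity Fol A) :
    0 < upperDensity Fol ((fun h => g * h) '' A) := by
  obtain ⟨α, hα, hP⟩ := exists_pos_of_ud_pos h
  have hev : ∀ᶠ n in (atTop : Filter D),
      ((symmDiff ((Fol n).image fun h => g⁻¹ * h) (Fol n)).card : ℝ) / (Fol n).card < α/2 :=
    (hFol.2 g⁻¹).eventually (eventually_lt_nhds (half_pos hα))
  rw [eventually_atTop] at hev
  obtain ⟨m₀, hm₀⟩ := hev
  have key : ∀ m : D, ∃ n : D, m ≤ n ∧
      α/2 ≤ (((Fol n : Set G) ∩ ((fun h => g * h) '' A)).ncard : ℝ) / (Fol n).card := by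
    intro m
    obtain ⟨m₁, hm₁, hm₁'⟩ := exists_ge_ge m m₀
    obtain ⟨n, hn, hratio⟩ := hP m₁
    refine ⟨n, hm₁.trans hn, ?_⟩
    have hsd := hm₀ n (hm₁'.trans hn)
    set F := Fol n with hF
    set T := F.image (fun h => g⁻¹ * h) with hT
    have hfinF : ((F : Set G) ∩ A).Finite := F.finite_toSet.inter_of_left A
    have hfinT : ((T : Set G) ∩ A).Finite := T.finite_toSet.inter_of_left A
    -- claim 1 : a ≤ b + s
    have claim1 : ((F : Set G) ∩ A).ncard ≤ ((T : Set G) ∩ A).ncard + (symmDiff T F).card := by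
      have hsub : (F : Set G) ∩ A ⊆ ((T : Set G) ∩ A) ∪ (F \ T : Finset G) := by
        rintro y ⟨hyF, hyA⟩
        by_cases hy : y ∈ T
        · exact Or.inl ⟨hy, hyA⟩
        · exact Or.inr (by simp [Finset.mem_sdiff, hyF, hy])
      calc ((F : Set G) ∩ A).ncard
          ≤ (((T : Set G) ∩ A) ∪ (F \ T : Finset G)).ncard :=
            Set.ncard_le_ncard hsub (hfinT.union (F \ T).finite_toSet)
        _ ≤ ((T : Set G) ∩ A).ncard + ((F \ T : Finset G) : Set G).ncard :=
            Set.ncard_union_le _ _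
        _ ≤ ((T : Set G) ∩ A).ncard + (symmDiff T F).card := by
            gcongr
            rw [Set.ncard_coe_finset]
            exact Finset.card_le_card (by rw [symmDiff_def]; exact Finset.subset_union_right)
    -- claim 2 : b ≤ ncard (F ∩ gA)
    have claim2 : ((T : Set G) ∩ A).ncard ≤ ((F : Set G) ∩ ((fun h => g * h) '' A)).ncard := by
      have himg : (fun h => g * h) '' ((T : Set G) ∩ A) ⊆ (F : Set G) ∩ ((fun h => g * h) '' A) := by
        rintro _ ⟨y, ⟨hyT, hyA⟩, rfl⟩
        refine ⟨?_, ⟨y, hyA, rfl⟩⟩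
        rw [hT] at hyT
        simp only [Finset.coe_image, Set.mem_image, Finset.mem_coe] at hyT
        obtain ⟨f, hf, rfl⟩ := hyT
        simpa using hf
      calc ((T : Set G) ∩ A).ncard
          = ((fun h => g * h) '' ((T : Set G) ∩ A)).ncard :=
            (Set.ncard_image_of_injective _ (mul_right_injective g)).symm
        _ ≤ ((F : Set G) ∩ ((fun h => g * h) '' A)).ncard :=
            Set.ncard_le_ncard himg (F.finite_toSet.inter_of_left _)
    -- now the real computation
    have hc : (0:ℝ) < F.card := by exact_mod_cast Finset.card_pos.mpr (hFol.1 n)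
    have h1 : (((F : Set G) ∩ A).ncard : ℝ) ≤ ((T : Set G) ∩ A).ncard + (symmDiff T F).card := by
      exact_mod_cast claim1
    have h2 : (((T : Set G) ∩ A).ncard : ℝ) ≤ ((F : Set G) ∩ ((fun h => g * h) '' A)).ncard := by
      exact_mod_cast claim2
    have hs : ((symmDiff T F).card : ℝ) / F.card < α / 2 := hsd
    have hr : α ≤ (((F : Set G) ∩ A).ncard : ℝ) / F.card := hratio
    calc α / 2 = α - α/2 := by ring
      _ ≤ (((F : Set G) ∩ A).ncard : ℝ) / F.card - ((symmDiff T F).card : ℝ) / F.card := by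
          exact sub_le_sub hr hs.le
      _ = ((((F : Set G) ∩ A).ncard : ℝ) - (symmDiff T F).card) / F.card := by ring
      _ ≤ (((T : Set G) ∩ A).ncard : ℝ) / F.card := by
          gcongr
          linarith
      _ ≤ (((F : Set G) ∩ ((fun h => g * h) '' A)).ncard : ℝ) / F.card := by
          gcongr
  have := le_ud_of_mem hFol.1 key
  linarith

end Aux
section Aux2

variable {G : Type*} [Group G] [DecidableEq G]
variable {D : Type*} [Preorder D] [IsDirected D (· ≤ ·)] [Nonempty D]
variable {Fol : D → Finset G}
variable {X : Type*} [MetricSpace X] [MulAction G X]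

lemma minCenter_isClosed (x : X) : IsClosed (minCenter Fol x) := by
  rw [← isOpen_compl_iff, isOpen_iff_mem_nhds]
  intro y hy
  simp only [Set.mem_compl_iff, minCenter, Set.mem_setOf_eq, not_forall] at hy
  obtain ⟨U, hU, hyU, hUd⟩ := hy
  filter_upwards [hU.mem_nhds hyU] with z hz
  intro hzC
  exact hUd (hzC U hU hz)

lemma minCenter_smul_mem (hFol : IsFolnerNet Fol)
    (hcont : ∀ g : G, Continuous fun y : X => g • y)
    (x : X) (g : G) {y : X} (hy : y ∈ minCenter Fol x) :
    g • y ∈ minCenter Fol x := by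
  intro U hU hgy
  have hV : IsOpen ((fun w : X => g • w) ⁻¹' U) := hU.preimage (hcont g)
  have h1 := hy _ hV (Set.mem_preimage.mpr hgy)
  have hset : (fun h : G => g * h) '' {h : G | h • x ∈ (fun w : X => g • w) ⁻¹' U}
      = {h : G | h • x ∈ U} := by
    ext k
    simp only [Set.mem_image, Set.mem_setOf_eq, Set.mem_preimage]
    constructor
    · rintro ⟨h, hh, rfl⟩
      rwa [mul_smul]
    · intro hk
      exact ⟨g⁻¹ * k, by simpa [smul_smul] using hk, by simp⟩
  rw [← hset]
  exact ud_smul_pos hFol g h1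

lemma minCenter_subset_closure_orbit_s11 (hFol : IsFolnerNet Fol) (w : X) :
    minCenter Fol w ⊆ closure (Set.range fun g : G => g • w) := by
  intro y hy
  rw [_root_.mem_closure_iff]
  intro o ho hyo
  obtain ⟨g, hg⟩ := nonempty_of_ud_pos hFol.1 (hy o ho hyo)
  exact ⟨g • w, hg, ⟨g, rfl⟩⟩

end Aux2
section Ellis

variable (G : Type*) [Group G]
variable {X : Type*} [MetricSpace X] [CompactSpace X] [MulAction G X]

/-- The Ellis (enveloping) semigroup of the action: the closure of `G` in `X → X`. -/
def ellisSG : Set (X → X) := closure (Set.range fun (g : G) (y : X) => g • y)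

variable {G}

lemma ellis_contR (v : X → X) : Continuous fun f : X → X => f ∘ v :=
  continuous_pi fun y => continuous_apply (v y)

lemma ellis_isClosed : IsClosed (ellisSG G (X := X)) := isClosed_closure

lemma ellis_isCompact : IsCompact (ellisSG G (X := X)) :=
  (ellis_isClosed).isCompact

lemma ellis_nonempty : (ellisSG G (X := X)).Nonempty :=
  ⟨fun y => (1 : G) • y, subset_closure ⟨1, rfl⟩⟩

lemma ellis_comp_mem (hcont : ∀ g : G, Continuous fun y : X => g • y)
    {u v : X → X} (hu : u ∈ ellisSG G) (hv : v ∈ ellisSG G) : u ∘ v ∈ ellisSG G := by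
  have step1 : ∀ g : G, ∀ w ∈ ellisSG G, ((fun y : X => g • y) ∘ w) ∈ ellisSG G := by
    intro g w hw
    have hcg : Continuous fun f : X → X => (fun y : X => g • y) ∘ f :=
      continuous_pi fun y => (hcont g).comp (continuous_apply y)
    have h1 : (fun f : X → X => (fun y : X => g • y) ∘ f) ''
        (Set.range fun (h : G) (y : X) => h • y) ⊆ Set.range fun (h : G) (y : X) => h • y := by
      rintro _ ⟨_, ⟨h, rfl⟩, rfl⟩
      exact ⟨g * h, funext fun y => mul_smul g h y⟩
    have h2 := image_closure_subset_closure_image (s := Set.range fun (h : G) (y : X) => h • y) hcg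
    have h3 : ((fun y : X => g • y) ∘ w) ∈
        closure ((fun f : X → X => (fun y : X => g • y) ∘ f) ''
          (Set.range fun (h : G) (y : X) => h • y)) := h2 ⟨w, hw, rfl⟩
    exact closure_mono h1 h3
  -- now use right-continuity
  have h2 := image_closure_subset_closure_image (s := Set.range fun (g : G) (y : X) => g • y)
    (ellis_contR v)
  have h3 : u ∘ v ∈ closure ((fun f : X → X => f ∘ v) ''
      (Set.range fun (g : G) (y : X) => g • y)) := h2 ⟨u, hu, rfl⟩
  have h4 : (fun f : X → X => f ∘ v) '' (Set.range fun (g : G) (y : X) => g • y)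
      ⊆ ellisSG G := by
    rintro _ ⟨_, ⟨g, rfl⟩, rfl⟩
    exact step1 g v hv
  have h5 := closure_mono h4 h3
  rwa [(ellis_isClosed (X := X)).closure_eq] at h5

lemma ellis_eval (w : X) :
    (fun f : X → X => f w) '' (ellisSG G) = closure (Set.range fun g : G => g • w) := by
  apply Set.Subset.antisymm
  · have h1 := image_closure_subset_closure_image
      (s := Set.range fun (g : G) (y : X) => g • y) (continuous_apply w)
    have h2 : (fun f : X → X => f w) '' (Set.range fun (g : G) (y : X) => g • y)
        = Set.range fun g : G => g • w := by
      ext z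
      constructor
      · rintro ⟨_, ⟨g, rfl⟩, rfl⟩; exact ⟨g, rfl⟩
      · rintro ⟨g, rfl⟩; exact ⟨fun y => g • y, ⟨g, rfl⟩, rfl⟩
    rw [← h2]
    exact h1
  · apply closure_minimal
    · rintro _ ⟨g, rfl⟩
      exact ⟨fun y => g • y, subset_closure ⟨g, rfl⟩, rfl⟩
    · exact ((ellis_isCompact).image (continuous_apply w)).isClosed

lemma exists_minimal_ideal (hcont : ∀ g : G, Continuous fun y : X => g • y) :
    ∃ L : Set (X → X), L ⊆ ellisSG G ∧ L.Nonempty ∧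
      (∀ u ∈ ellisSG G, ∀ v ∈ L, u ∘ v ∈ L) ∧
      (∀ v ∈ L, (fun f : X → X => f ∘ v) '' (ellisSG G) = L) ∧
      ∃ u ∈ L, u ∘ u = u := by
  set S : Set (Set (X → X)) :=
    {L | L ⊆ ellisSG G ∧ L.Nonempty ∧ IsClosed L ∧ ∀ u ∈ ellisSG G, ∀ v ∈ L, u ∘ v ∈ L} with hS
  have hES : ellisSG G (X := X) ∈ S :=
    ⟨Set.Subset.rfl, ellis_nonempty, ellis_isClosed, fun u hu v hv => ellis_comp_mem hcont hu hv⟩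
  have Hzorn : ∀ c ⊆ S, IsChain (· ⊆ ·) c → c.Nonempty →
      ∃ lb ∈ S, ∀ s ∈ c, lb ⊆ s := by
    intro c hcS hchain hcne
    refine ⟨⋂₀ c, ⟨?_, ?_, ?_, ?_⟩, fun s hs => Set.sInter_subset_of_mem hs⟩
    · obtain ⟨s, hs⟩ := hcne
      exact (Set.sInter_subset_of_mem hs).trans (hcS hs).1
    · haveI : Nonempty c := hcne.to_subtype
      rw [Set.sInter_eq_iInter]
      apply IsCompact.nonempty_iInter_of_directed_nonempty_isCompact_isClosed
      · intro s t
        rcases hchain.total s.2 t.2 with h | h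
        · exact ⟨s, Set.Subset.rfl, h⟩
        · exact ⟨t, h, Set.Subset.rfl⟩
      · exact fun s => (hcS s.2).2.1
      · exact fun s => (hcS s.2).2.2.1.isCompact
      · exact fun s => (hcS s.2).2.2.1
    · exact isClosed_sInter fun s hs => (hcS hs).2.2.1
    · intro u hu v hv
      exact Set.mem_sInter.mpr fun s hs => (hcS hs).2.2.2 u hu v (Set.mem_sInter.mp hv s hs)
  obtain ⟨L, -, hLmin⟩ := zorn_superset_nonempty S Hzorn _ hES
  obtain ⟨hLE, hLne, hLcl, hLideal⟩ := hLmin.prop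
  have hLcomp : IsCompact L := hLcl.isCompact
  -- minimality gives: for v ∈ L, E ∘ v = L
  have hLeq : ∀ v ∈ L, (fun f : X → X => f ∘ v) '' (ellisSG G) = L := by
    intro v hv
    have hJS : ((fun f : X → X => f ∘ v) '' (ellisSG G)) ∈ S := by
      refine ⟨?_, ?_, ?_, ?_⟩
      · rintro _ ⟨e, he, rfl⟩
        exact hLE (hLideal e he v hv)
      · exact ellis_nonempty.image _
      · exact ((ellis_isCompact).image (ellis_contR v)).isClosed
      · rintro u hu _ ⟨e, he, rfl⟩
        exact ⟨u ∘ e, ellis_comp_mem hcont hu he, rfl⟩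
    have hJL : ((fun f : X → X => f ∘ v) '' (ellisSG G)) ⊆ L := by
      rintro _ ⟨e, he, rfl⟩
      exact hLideal e he v hv
    exact Set.Subset.antisymm hJL (hLmin.2 hJS hJL)
  -- idempotent via Ellis' lemma
  letI sg : Semigroup (X → X) := { mul := fun f g => f ∘ g, mul_assoc := fun _ _ _ => rfl }
  obtain ⟨u, huL, huid⟩ := exists_idempotent_in_compact_subsemigroup
    (fun r => show Continuous fun f : X → X => f ∘ r from ellis_contR r)
    L hLne hLcomp (fun a ha b hb => hLideal a (hLE ha) b hb)
  exact ⟨L, hLE, hLne, hLideal, hLeq, u, huL, huid⟩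

end Ellis

/-- Theorem 1.3: if `C_F(x)` is S-generic and not minimal, then `C_F(x)` contains an
F-chaotic pair. -/
theorem exists_Fchaotic_pair
    {G : Type*} [Group G] [Infinite G] [DecidableEq G]
    {D : Type*} [Preorder D] [IsDirected D (· ≤ ·)] [Nonempty D]
    {X : Type*} [MetricSpace X] [CompactSpace X] [MulAction G X]
    (hcont : ∀ g : G, Continuous fun y : X => g • y)
    (Fol : D → Finset G) (hFol : IsFolnerNet Fol) (x : X)
    (hS : ∃ z ∈ minCenter Fol x, minCenter Fol z = minCenter Fol x)
    (hnotmin : ¬ IsMinimalSubset G (minCenter Fol x)) :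
    ∃ y ∈ minCenter Fol x, ∃ z ∈ minCenter Fol x,
      (∃ l : ℕ → G, Tendsto (fun n => dist ((l n) • y) z) atTop (nhds 0)) ∧
      (∃ r : ℕ → G, 0 < Filter.liminf (fun n => dist ((r n) • y) z) atTop) ∧
      (∃ s : ℕ → G, Tendsto (fun n => dist ((s n) • y) ((s n) • z)) atTop (nhds 0)) ∧
      (∃ t : ℕ → G, 0 < Filter.liminf (fun n => dist ((t n) • y) ((t n) • z)) atTop) := by
  obtain ⟨p, hpC, hpeq⟩ := hS
  have hCclosed : IsClosed (minCenter Fol x) := minCenter_isClosed x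
  have hCinv : ∀ g : G, ∀ z ∈ minCenter Fol x, g • z ∈ minCenter Fol x :=
    fun g z hz => minCenter_smul_mem hFol hcont x g hz
  have horb_sub : (Set.range fun g : G => g • p) ⊆ minCenter Fol x := by
    rintro _ ⟨g, rfl⟩; exact hCinv g p hpC
  have hCeq : minCenter Fol x = closure (Set.range fun g : G => g • p) := by
    apply Set.Subset.antisymm
    · rw [← hpeq]; exact minCenter_subset_closure_orbit_s11 hFol p
    · exact closure_minimal horb_sub hCclosed
  -- the Ellis semigroup machinery
  obtain ⟨L, hLE, hLne, hLideal, hLeq, u, huL, huid⟩ := exists_minimal_ideal (G := G) (X := X) hcont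
  have huE : u ∈ ellisSG G := hLE huL
  have hqC : u p ∈ minCenter Fol x := by
    have h1 : u p ∈ (fun f : X → X => f p) '' (ellisSG G) := ⟨u, huE, rfl⟩
    rw [ellis_eval p] at h1
    rw [hCeq]; exact h1
  have hLp : ∀ v ∈ L, (fun f : X → X => f p) '' L = closure (Set.range fun g : G => g • (v p)) := by
    intro v hv
    rw [← hLeq v hv, Set.image_image]
    exact ellis_eval (v p)
  have huup : u (u p) = u p := congrFun huid p
  -- p ≠ u p, since otherwise minCenter Fol x would be a minimal subset
  have hpq : p ≠ u p := by
    intro hpq'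
    apply hnotmin
    have hCL : (fun f : X → X => f p) '' L = minCenter Fol x := by
      rw [hLp u huL, ← hpq', ← hCeq]
    refine ⟨⟨p, hpC⟩, hCclosed, hCinv, ?_⟩
    intro Λ' hΛ'sub hΛ'ne hΛ'cl hΛ'inv
    obtain ⟨y, hy⟩ := hΛ'ne
    obtain ⟨v, hvL, hvp⟩ : ∃ v ∈ L, v p = y := by
      have h2 : y ∈ minCenter Fol x := hΛ'sub hy
      rw [← hCL] at h2
      obtain ⟨v, hv, hvp⟩ := h2
      exact ⟨v, hv, hvp⟩
    have h3 : minCenter Fol x ⊆ Λ' := by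
      rw [← hCL, hLp v hvL, hvp]
      apply closure_minimal _ hΛ'cl
      rintro _ ⟨g, rfl⟩
      exact hΛ'inv g y hy
    exact Set.Subset.antisymm hΛ'sub h3
  -- construct the approximating sequence
  have hrange : ∀ n : ℕ, ∃ g : G,
      dist (g • p) (u p) < 1/(n+1) ∧ dist (g • (u p)) (u p) < 1/(n+1) := by
    intro n
    have hpos : (0:ℝ) < 1/(n+1) := by positivity
    have hopen : IsOpen {f : X → X |
        dist (f p) (u p) < 1/(n+1) ∧ dist (f (u p)) (u p) < 1/(n+1)} := by
      have h1 : IsOpen {f : X → X | dist (f p) (u p) < 1/(n+1)} :=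
        isOpen_Iio.preimage ((continuous_apply p).dist continuous_const)
      have h2 : IsOpen {f : X → X | dist (f (u p)) (u p) < 1/(n+1)} :=
        isOpen_Iio.preimage ((continuous_apply (u p)).dist continuous_const)
      exact h1.inter h2
    have humem : u ∈ {f : X → X |
        dist (f p) (u p) < 1/(n+1) ∧ dist (f (u p)) (u p) < 1/(n+1)} := by
      constructor
      · simpa using hpos
      · rw [huup]; simpa using hpos
    have := (_root_.mem_closure_iff.mp huE) _ hopen humem
    obtain ⟨f, hfset, g, rfl⟩ := this
    exact ⟨g, hfset.1, hfset.2⟩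
  choose s hs1 hs2 using hrange
  have htend : Tendsto (fun n : ℕ => (1:ℝ)/(n+1)) atTop (nhds 0) :=
    tendsto_one_div_add_atTop_nhds_zero_nat
  refine ⟨p, hpC, u p, hqC, ⟨s, ?_⟩, ⟨fun _ => 1, ?_⟩, ⟨s, ?_⟩, ⟨fun _ => 1, ?_⟩⟩
  · exact squeeze_zero (fun n => dist_nonneg) (fun n => (hs1 n).le) htend
  · simp only [one_smul]
    rw [liminf_const]
    exact dist_pos.mpr hpq
  · apply squeeze_zero (g := fun n : ℕ => 1/(n+1) + 1/(n+1)) (fun n => dist_nonneg)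
    · intro n
      calc dist (s n • p) (s n • (u p))
          ≤ dist (s n • p) (u p) + dist (u p) (s n • (u p)) := dist_triangle _ _ _
        _ ≤ 1/(n+1) + 1/(n+1) := by
            rw [dist_comm (u p)]
            exact add_le_add (hs1 n).le (hs2 n).le
    · simpa using htend.add htend
  · simp only [one_smul]
    rw [liminf_const]
    exact dist_pos.mpr hpq
end
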